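/- arXiv:2605.10929 — 4 statements merged into one kernel-verified Lean document; each statement's English description precedes it below -/
import Mathlib

section
/- Fix ε > 0 and a point (u, v, w) ∈ ℝ × ℝⁿ × ℝ, and define f(β) = dist((u,v,w), F^ε_β)² for β ≥ 0. Then f is convex on [0, ∞): for all β₁, β₂ ≥ 0 and λ ∈ [0,1], f(λβ₁ + (1−λ)β₂) ≤ λ f(β₁) + (1−λ) f(β₂). -/
lemma sq_cvx (a b l m : ℝ) (hl : 0 ≤ l) (hm : 0 ≤ m) (hlm : l + m = 1) :
    (l*a + m*b)^2 ≤ l*a^2 + m*b^2 := by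
  nlinarith [sq_nonneg (a - b), mul_nonneg hl hm]

lemma key_div (s t r₁ r₂ l m : ℝ) (hr₁ : 0 < r₁) (hr₂ : 0 < r₂)
    (hl : 0 ≤ l) (hm : 0 ≤ m) (hlm : l + m = 1) :
    (l*s + m*t)^2 / (l*r₁ + m*r₂) ≤ l*(s^2/r₁) + m*(t^2/r₂) := by
  have hmin : (0:ℝ) < min r₁ r₂ := lt_min hr₁ hr₂
  have hr : 0 < l*r₁ + m*r₂ := by
    nlinarith [mul_le_mul_of_nonneg_left (min_le_left r₁ r₂) hl,
      mul_le_mul_of_nonneg_left (min_le_right r₁ r₂) hm]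
  rw [div_le_iff₀ hr]
  have h1 : s^2/r₁ * r₁ = s^2 := div_mul_cancel₀ _ hr₁.ne'
  have h2 : t^2/r₂ * r₂ = t^2 := div_mul_cancel₀ _ hr₂.ne'
  have hD : s^2/r₁*r₂ + t^2/r₂*r₁ - 2*(s*t) = (s*r₂ - t*r₁)^2/(r₁*r₂) := by
    field_simp; ring
  have hD0 : 0 ≤ s^2/r₁*r₂ + t^2/r₂*r₁ - 2*(s*t) := by
    rw [hD]; positivity
  nlinarith [mul_nonneg (mul_nonneg hl hm) hD0, h1, h2, sq_nonneg l, sq_nonneg m,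
    mul_nonneg hl hm]



/-- The Euler-like admissible set
`F^ε_β = {(ρ, m, E) : ρ ≥ ε and E − ‖m‖₂²/(2ρ) ≥ ε + β/2}`. -/
def Feps (n : ℕ) (ε β : ℝ) : Set (ℝ × EuclideanSpace ℝ (Fin n) × ℝ) :=
  {p | ε ≤ p.1 ∧ ε + β / 2 ≤ p.2.2 - ‖p.2.1‖ ^ 2 / (2 * p.1)}

/-- The Euclidean distance from the point `(u, v, w) ∈ ℝ × ℝⁿ × ℝ` to a set `S`,
i.e. the infimum over `p ∈ S` of the Euclidean distance from `(u, v, w)` to `p`. -/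
noncomputable def distTo (n : ℕ) (u : ℝ) (v : EuclideanSpace ℝ (Fin n)) (w : ℝ)
    (S : Set (ℝ × EuclideanSpace ℝ (Fin n) × ℝ)) : ℝ :=
  sInf ((fun p => Real.sqrt ((p.1 - u) ^ 2 + ‖p.2.1 - v‖ ^ 2 + (p.2.2 - w) ^ 2)) '' S)

set_option maxHeartbeats 1000000 in
/-- `f(β) = dist((u,v,w), F^ε_β)²` is convex on `[0, ∞)`. -/
theorem f_convex (n : ℕ) (hn : 0 < n) (ε : ℝ) (hε : 0 < ε)
    (u : ℝ) (v : EuclideanSpace ℝ (Fin n)) (w : ℝ) :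
    ConvexOn ℝ (Set.Ici (0 : ℝ))
      (fun β => distTo n u v w (Feps n ε β) ^ 2) := by
  set D : (ℝ × EuclideanSpace ℝ (Fin n) × ℝ) → ℝ :=
    fun p => Real.sqrt ((p.1 - u) ^ 2 + ‖p.2.1 - v‖ ^ 2 + (p.2.2 - w) ^ 2) with hDdef
  have hDsq : ∀ p, (D p) ^ 2 = (p.1 - u) ^ 2 + ‖p.2.1 - v‖ ^ 2 + (p.2.2 - w) ^ 2 := by
    intro p
    exact Real.sq_sqrt (by positivity)
  have hne : ∀ β : ℝ, (D '' Feps n ε β).Nonempty := by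
    intro β
    refine ⟨D (ε, 0, ε + β/2), Set.mem_image_of_mem _ ?_⟩
    constructor
    · exact le_refl ε
    · simp
  have hbdd : ∀ β : ℝ, BddBelow (D '' Feps n ε β) := by
    intro β
    exact ⟨0, fun x ⟨p, _, hp⟩ => hp ▸ Real.sqrt_nonneg _⟩
  have hd0 : ∀ β : ℝ, 0 ≤ distTo n u v w (Feps n ε β) := by
    intro β
    exact Real.sInf_nonneg (fun x ⟨p, _, hp⟩ => hp ▸ Real.sqrt_nonneg _)
  refine ⟨convex_Ici 0, ?_⟩
  intro β₁ _ β₂ _ l m hl hm hlm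
  simp only [smul_eq_mul]
  set a := distTo n u v w (Feps n ε β₁) with ha
  set b := distTo n u v w (Feps n ε β₂) with hb
  have key : ∀ δ : ℝ, 0 < δ →
      distTo n u v w (Feps n ε (l*β₁ + m*β₂)) ^ 2 ≤ l*(a+δ)^2 + m*(b+δ)^2 := by
    intro δ hδ
    obtain ⟨d₁, ⟨p₁, hp₁, rfl⟩, hlt₁⟩ := Real.lt_sInf_add_pos (hne β₁) hδ
    obtain ⟨d₂, ⟨p₂, hp₂, rfl⟩, hlt₂⟩ := Real.lt_sInf_add_pos (hne β₂) hδ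
    set q : ℝ × EuclideanSpace ℝ (Fin n) × ℝ :=
      (l*p₁.1 + m*p₂.1, l•p₁.2.1 + m•p₂.2.1, l*p₁.2.2 + m*p₂.2.2) with hqdef
    have hεq : l*ε + m*ε = ε := by rw [← add_mul, hlm, one_mul]
    have hρ₁ : 0 < p₁.1 := lt_of_lt_of_le hε hp₁.1
    have hρ₂ : 0 < p₂.1 := lt_of_lt_of_le hε hp₂.1
    have hq1 : ε ≤ q.1 := by
      have h1 := mul_le_mul_of_nonneg_left hp₁.1 hl
      have h2 := mul_le_mul_of_nonneg_left hp₂.1 hm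
      simp only [hqdef]
      linarith
    have hnq : ‖q.2.1‖ ≤ l*‖p₁.2.1‖ + m*‖p₂.2.1‖ := by
      refine (norm_add_le _ _).trans (le_of_eq ?_)
      rw [norm_smul, norm_smul, Real.norm_eq_abs, Real.norm_eq_abs,
        abs_of_nonneg hl, abs_of_nonneg hm]
    have hq2 : ε + (l*β₁ + m*β₂) / 2 ≤ q.2.2 - ‖q.2.1‖ ^ 2 / (2 * q.1) := by
      have hkd := key_div ‖p₁.2.1‖ ‖p₂.2.1‖ (2*p₁.1) (2*p₂.1) l m
        (by linarith) (by linarith) hl hm hlm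
      have h2q : 2 * q.1 = l*(2*p₁.1) + m*(2*p₂.1) := by simp only [hqdef]; ring
      have hq1pos : 0 < 2 * q.1 := by linarith
      have hsq : ‖q.2.1‖ ^ 2 ≤ (l*‖p₁.2.1‖ + m*‖p₂.2.1‖) ^ 2 :=
        pow_le_pow_left₀ (norm_nonneg _) hnq 2
      have hdiv : ‖q.2.1‖ ^ 2 / (2 * q.1) ≤
          l*(‖p₁.2.1‖^2/(2*p₁.1)) + m*(‖p₂.2.1‖^2/(2*p₂.1)) := by
        have step1 : ‖q.2.1‖ ^ 2 / (2 * q.1) ≤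
            (l*‖p₁.2.1‖ + m*‖p₂.2.1‖) ^ 2 / (2 * q.1) := by gcongr
        rw [← h2q] at hkd
        exact step1.trans hkd
      have e1 := mul_le_mul_of_nonneg_left hp₁.2 hl
      have e2 := mul_le_mul_of_nonneg_left hp₂.2 hm
      have hq22 : q.2.2 = l*p₁.2.2 + m*p₂.2.2 := rfl
      rw [hq22]
      nlinarith [hdiv, e1, e2]
    have hqmem : q ∈ Feps n ε (l*β₁ + m*β₂) := ⟨hq1, hq2⟩
    have hsle : distTo n u v w (Feps n ε (l*β₁ + m*β₂)) ≤ D q :=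
      csInf_le (hbdd _) (Set.mem_image_of_mem _ hqmem)
    have hv : q.2.1 - v = l•(p₁.2.1 - v) + m•(p₂.2.1 - v) := by
      have hvsum : l•v + m•v = v := by rw [← add_smul, hlm, one_smul]
      have hq21 : q.2.1 = l•p₁.2.1 + m•p₂.2.1 := rfl
      calc q.2.1 - v = l•p₁.2.1 + m•p₂.2.1 - (l•v + m•v) := by rw [hq21, hvsum]
        _ = l•(p₁.2.1 - v) + m•(p₂.2.1 - v) := by
            rw [smul_sub, smul_sub]; abel
    have hnv : ‖q.2.1 - v‖ ≤ l*‖p₁.2.1 - v‖ + m*‖p₂.2.1 - v‖ := by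
      rw [hv]
      refine (norm_add_le _ _).trans (le_of_eq ?_)
      rw [norm_smul, norm_smul, Real.norm_eq_abs, Real.norm_eq_abs,
        abs_of_nonneg hl, abs_of_nonneg hm]
    have eu : q.1 - u = l*(p₁.1 - u) + m*(p₂.1 - u) := by
      have : q.1 = l*p₁.1 + m*p₂.1 := rfl
      rw [this]; linear_combination u * hlm
    have ew : q.2.2 - w = l*(p₁.2.2 - w) + m*(p₂.2.2 - w) := by
      have : q.2.2 = l*p₁.2.2 + m*p₂.2.2 := rfl
      rw [this]; linear_combination w * hlm
    have hDq : (D q) ^ 2 ≤ l*(D p₁)^2 + m*(D p₂)^2 := by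
      rw [hDsq, hDsq, hDsq, eu, ew]
      have c1 := sq_cvx (p₁.1 - u) (p₂.1 - u) l m hl hm hlm
      have c3 := sq_cvx (p₁.2.2 - w) (p₂.2.2 - w) l m hl hm hlm
      have c2 : ‖q.2.1 - v‖^2 ≤ l*‖p₁.2.1 - v‖^2 + m*‖p₂.2.1 - v‖^2 :=
        (pow_le_pow_left₀ (norm_nonneg _) hnv 2).trans
          (sq_cvx _ _ l m hl hm hlm)
      nlinarith [c1, c2, c3]
    have hDp0 : ∀ p, 0 ≤ D p := fun p => Real.sqrt_nonneg _
    have hD1 : (D p₁)^2 ≤ (a + δ)^2 := pow_le_pow_left₀ (hDp0 p₁) hlt₁.le 2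
    have hD2 : (D p₂)^2 ≤ (b + δ)^2 := pow_le_pow_left₀ (hDp0 p₂) hlt₂.le 2
    have hfinal : (D q)^2 ≤ l*(a+δ)^2 + m*(b+δ)^2 := by
      nlinarith [mul_le_mul_of_nonneg_left hD1 hl, mul_le_mul_of_nonneg_left hD2 hm]
    exact le_trans (pow_le_pow_left₀ (hd0 _) hsle 2) hfinal
  have hlim : Filter.Tendsto (fun δ : ℝ => l*(a+δ)^2 + m*(b+δ)^2)
      (nhdsWithin 0 (Set.Ioi 0)) (nhds (l*a^2 + m*b^2)) := by
    have hc : Continuous fun δ : ℝ => l*(a+δ)^2 + m*(b+δ)^2 := by fun_prop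
    have h := hc.tendsto 0
    simp only [add_zero] at h
    exact h.mono_left nhdsWithin_le_nhds
  exact ge_of_tendsto hlim (eventually_nhdsWithin_of_forall fun δ hδ => key δ hδ)
end

section
/- Fix ε > 0, a point (u, v, w) ∈ ℝ × ℝⁿ × ℝ, and a nonzero z ∈ ℝⁿ. Define f(β) = dist((u,v,w), F^ε_β)² and d²(β) = f(β) + (√β − ‖z‖₂)² for β ≥ 0. Then d² is strictly convex on [0, ∞): for all β₁ ≠ β₂ in [0, ∞) and all λ ∈ (0,1), d²(λβ₁ + (1−λ)β₂) < λ d²(β₁) + (1−λ) d²(β₂). -/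
/-- Cauchy–Schwarz-type inequality in ℝ³ written with square roots. -/
lemma sqrt_tri (x1 s x3 y1 t y3 : ℝ) :
    Real.sqrt ((x1 + y1) ^ 2 + (s + t) ^ 2 + (x3 + y3) ^ 2) ≤
      Real.sqrt (x1 ^ 2 + s ^ 2 + x3 ^ 2) + Real.sqrt (y1 ^ 2 + t ^ 2 + y3 ^ 2) := by
  set A := Real.sqrt (x1 ^ 2 + s ^ 2 + x3 ^ 2) with hA
  set B := Real.sqrt (y1 ^ 2 + t ^ 2 + y3 ^ 2) with hB
  have hA0 : 0 ≤ A := Real.sqrt_nonneg _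
  have hB0 : 0 ≤ B := Real.sqrt_nonneg _
  have hA2 : A ^ 2 = x1 ^ 2 + s ^ 2 + x3 ^ 2 := Real.sq_sqrt (by positivity)
  have hB2 : B ^ 2 = y1 ^ 2 + t ^ 2 + y3 ^ 2 := Real.sq_sqrt (by positivity)
  have key : x1 * y1 + s * t + x3 * y3 ≤ A * B := by
    have hAB : A * B = Real.sqrt ((x1 ^ 2 + s ^ 2 + x3 ^ 2) * (y1 ^ 2 + t ^ 2 + y3 ^ 2)) := by
      rw [hA, hB, ← Real.sqrt_mul (by positivity)]
    rcases le_or_gt (x1 * y1 + s * t + x3 * y3) 0 with h | h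
    · exact h.trans (mul_nonneg hA0 hB0)
    · rw [hAB]
      rw [show x1 * y1 + s * t + x3 * y3
          = Real.sqrt ((x1 * y1 + s * t + x3 * y3) ^ 2) from
          (Real.sqrt_sq h.le).symm]
      apply Real.sqrt_le_sqrt
      nlinarith [sq_nonneg (x1 * t - s * y1), sq_nonneg (x1 * y3 - x3 * y1),
        sq_nonneg (s * y3 - x3 * t)]
  have : (x1 + y1) ^ 2 + (s + t) ^ 2 + (x3 + y3) ^ 2 ≤ (A + B) ^ 2 := by
    nlinarith [key]
  calc Real.sqrt ((x1 + y1) ^ 2 + (s + t) ^ 2 + (x3 + y3) ^ 2)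
      ≤ Real.sqrt ((A + B) ^ 2) := Real.sqrt_le_sqrt this
    _ = A + B := Real.sqrt_sq (by positivity)

/-- Scalar joint convexity of `x²/ρ`. -/
lemma sq_div_convex (a b x y r1 r2 : ℝ) (ha : 0 ≤ a) (hb : 0 ≤ b) (hab : a + b = 1)
    (hx : 0 ≤ x) (hy : 0 ≤ y) (hr1 : 0 < r1) (hr2 : 0 < r2) :
    (a * x + b * y) ^ 2 / (a * r1 + b * r2) ≤ a * (x ^ 2 / r1) + b * (y ^ 2 / r2) := by
  have hr : 0 < a * r1 + b * r2 := by
    have h1 : a * min r1 r2 ≤ a * r1 := mul_le_mul_of_nonneg_left (min_le_left _ _) ha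
    have h2 : b * min r1 r2 ≤ b * r2 := mul_le_mul_of_nonneg_left (min_le_right _ _) hb
    have h3 : a * min r1 r2 + b * min r1 r2 = min r1 r2 := by
      rw [← add_mul, hab, one_mul]
    have h4 : 0 < min r1 r2 := lt_min hr1 hr2
    linarith
  rw [div_le_iff₀ hr]
  have h1 : a * (x ^ 2 / r1) = a * x ^ 2 / r1 := by ring
  have h2 : b * (y ^ 2 / r2) = b * y ^ 2 / r2 := by ring
  have expand : (a * (x ^ 2 / r1) + b * (y ^ 2 / r2)) * (a * r1 + b * r2)
      = (a * x ^ 2 * (a * r1 + b * r2)) / r1 + (b * y ^ 2 * (a * r1 + b * r2)) / r2 := by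
    field_simp
  rw [expand]
  have e1 : (a * x ^ 2 * (a * r1 + b * r2)) / r1
      = a ^ 2 * x ^ 2 + a * b * x ^ 2 * r2 / r1 := by field_simp
  have e2 : (b * y ^ 2 * (a * r1 + b * r2)) / r2
      = b ^ 2 * y ^ 2 + a * b * y ^ 2 * r1 / r2 := by field_simp; ring
  rw [e1, e2]
  have cross : 2 * (a * b * (x * y)) ≤ a * b * x ^ 2 * r2 / r1 + a * b * y ^ 2 * r1 / r2 := by
    have h := sq_nonneg (x * r2 - y * r1)
    have hab0 : 0 ≤ a * b := mul_nonneg ha hb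
    have key : 2 * (x * y) ≤ x ^ 2 * r2 / r1 + y ^ 2 * r1 / r2 := by
      rw [div_add_div _ _ (ne_of_gt hr1) (ne_of_gt hr2), le_div_iff₀ (by positivity)]
      nlinarith
    calc 2 * (a * b * (x * y)) = (a * b) * (2 * (x * y)) := by ring
      _ ≤ (a * b) * (x ^ 2 * r2 / r1 + y ^ 2 * r1 / r2) := by
          exact mul_le_mul_of_nonneg_left key hab0
      _ = a * b * x ^ 2 * r2 / r1 + a * b * y ^ 2 * r1 / r2 := by ring
  nlinarith [cross]

set_option maxHeartbeats 2000000 in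
/-- `d²(β) = dist((u,v,w), F^ε_β)² + (√β − ‖z‖₂)²` is strictly convex
on `[0, ∞)`. -/
theorem d2_strictConvex (n : ℕ) (hn : 0 < n) (ε : ℝ) (hε : 0 < ε)
    (u : ℝ) (v : EuclideanSpace ℝ (Fin n)) (w : ℝ)
    (z : EuclideanSpace ℝ (Fin n)) (hz : z ≠ 0) :
    StrictConvexOn ℝ (Set.Ici (0 : ℝ))
      (fun β : ℝ => distTo n u v w (Feps n ε β) ^ 2 + (Real.sqrt β - ‖z‖) ^ 2) := by
  classical
  set G : ℝ × EuclideanSpace ℝ (Fin n) × ℝ → ℝ :=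
    fun p => Real.sqrt ((p.1 - u) ^ 2 + ‖p.2.1 - v‖ ^ 2 + (p.2.2 - w) ^ 2) with hG
  set dfun : ℝ → ℝ := fun β => distTo n u v w (Feps n ε β) with hdfun
  -- nonemptiness of Feps
  have hne : ∀ β : ℝ, (Feps n ε β).Nonempty := by
    intro β
    refine ⟨(ε, 0, 2 * ε + β / 2 + |β| ), ?_, ?_⟩
    · exact le_rfl
    · simp only [norm_zero]
      have h2ε : (0:ℝ) < 2 * ε := by linarith
      have : (0:ℝ) ^ 2 / (2 * ε) = 0 := by simp
      rw [this]
      have := abs_nonneg β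
      linarith
  have hGnonneg : ∀ p, 0 ≤ G p := fun p => Real.sqrt_nonneg _
  have himne : ∀ β : ℝ, (G '' Feps n ε β).Nonempty := fun β => (hne β).image G
  have hbdd : ∀ β : ℝ, BddBelow (G '' Feps n ε β) := by
    intro β
    refine ⟨0, ?_⟩
    rintro x ⟨p, -, rfl⟩
    exact hGnonneg p
  have hd_nonneg : ∀ β : ℝ, 0 ≤ dfun β := by
    intro β
    apply Real.sInf_nonneg
    rintro x ⟨p, -, rfl⟩
    exact hGnonneg p
  have hd_le : ∀ β p, p ∈ Feps n ε β → dfun β ≤ G p := by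
    intro β p hp
    exact csInf_le (hbdd β) ⟨p, hp, rfl⟩
  -- joint convexity of the admissible sets
  have hmem : ∀ (a b β₁ β₂ : ℝ) (p₁ p₂ : ℝ × EuclideanSpace ℝ (Fin n) × ℝ),
      0 ≤ a → 0 ≤ b → a + b = 1 → p₁ ∈ Feps n ε β₁ → p₂ ∈ Feps n ε β₂ →
      (a * p₁.1 + b * p₂.1, a • p₁.2.1 + b • p₂.2.1, a * p₁.2.2 + b * p₂.2.2)
        ∈ Feps n ε (a * β₁ + b * β₂) := by
    intro a b β₁ β₂ p₁ p₂ ha hb hab h₁ h₂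
    obtain ⟨hρ₁, hE₁⟩ := h₁
    obtain ⟨hρ₂, hE₂⟩ := h₂
    have hρ₁' : 0 < p₁.1 := lt_of_lt_of_le hε hρ₁
    have hρ₂' : 0 < p₂.1 := lt_of_lt_of_le hε hρ₂
    have hcc : ε ≤ a * p₁.1 + b * p₂.1 := by
      have h1 : a * ε ≤ a * p₁.1 := mul_le_mul_of_nonneg_left hρ₁ ha
      have h2 : b * ε ≤ b * p₂.1 := mul_le_mul_of_nonneg_left hρ₂ hb
      have h3 : a * ε + b * ε = ε := by rw [← add_mul, hab, one_mul]
      linarith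
    constructor
    · exact hcc
    · simp only
      have hρ : 0 < a * p₁.1 + b * p₂.1 := lt_of_lt_of_le hε hcc
      have hnorm : ‖a • p₁.2.1 + b • p₂.2.1‖ ≤ a * ‖p₁.2.1‖ + b * ‖p₂.2.1‖ := by
        calc ‖a • p₁.2.1 + b • p₂.2.1‖ ≤ ‖a • p₁.2.1‖ + ‖b • p₂.2.1‖ := norm_add_le _ _
          _ = a * ‖p₁.2.1‖ + b * ‖p₂.2.1‖ := by
              rw [norm_smul, norm_smul, Real.norm_eq_abs, Real.norm_eq_abs,
                abs_of_nonneg ha, abs_of_nonneg hb]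
      have hsq : ‖a • p₁.2.1 + b • p₂.2.1‖ ^ 2 ≤ (a * ‖p₁.2.1‖ + b * ‖p₂.2.1‖) ^ 2 := by
        have := norm_nonneg (a • p₁.2.1 + b • p₂.2.1)
        nlinarith
      have hdiv : (a * ‖p₁.2.1‖ + b * ‖p₂.2.1‖) ^ 2 / (a * p₁.1 + b * p₂.1)
          ≤ a * (‖p₁.2.1‖ ^ 2 / p₁.1) + b * (‖p₂.2.1‖ ^ 2 / p₂.1) :=
        sq_div_convex a b ‖p₁.2.1‖ ‖p₂.2.1‖ p₁.1 p₂.1 ha hb hab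
          (norm_nonneg _) (norm_nonneg _) hρ₁' hρ₂'
      have step : ‖a • p₁.2.1 + b • p₂.2.1‖ ^ 2 / (2 * (a * p₁.1 + b * p₂.1))
          ≤ a * (‖p₁.2.1‖ ^ 2 / (2 * p₁.1)) + b * (‖p₂.2.1‖ ^ 2 / (2 * p₂.1)) := by
        have e : ‖a • p₁.2.1 + b • p₂.2.1‖ ^ 2 / (2 * (a * p₁.1 + b * p₂.1))
            = (‖a • p₁.2.1 + b • p₂.2.1‖ ^ 2 / (a * p₁.1 + b * p₂.1)) / 2 := by
          rw [mul_comm 2 (a * p₁.1 + b * p₂.1), ← div_div]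
        have e1 : a * (‖p₁.2.1‖ ^ 2 / (2 * p₁.1)) = (a * (‖p₁.2.1‖ ^ 2 / p₁.1)) / 2 := by
          rw [mul_comm 2 p₁.1, ← div_div]; ring
        have e2 : b * (‖p₂.2.1‖ ^ 2 / (2 * p₂.1)) = (b * (‖p₂.2.1‖ ^ 2 / p₂.1)) / 2 := by
          rw [mul_comm 2 p₂.1, ← div_div]; ring
        rw [e, e1, e2]
        have h1 : ‖a • p₁.2.1 + b • p₂.2.1‖ ^ 2 / (a * p₁.1 + b * p₂.1)
            ≤ a * (‖p₁.2.1‖ ^ 2 / p₁.1) + b * (‖p₂.2.1‖ ^ 2 / p₂.1) := by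
          calc ‖a • p₁.2.1 + b • p₂.2.1‖ ^ 2 / (a * p₁.1 + b * p₂.1)
              ≤ (a * ‖p₁.2.1‖ + b * ‖p₂.2.1‖) ^ 2 / (a * p₁.1 + b * p₂.1) := by
                gcongr
            _ ≤ _ := hdiv
        linarith
      have hE : ε + (a * β₁ + b * β₂) / 2
          ≤ a * p₁.2.2 + b * p₂.2.2
            - (a * (‖p₁.2.1‖ ^ 2 / (2 * p₁.1)) + b * (‖p₂.2.1‖ ^ 2 / (2 * p₂.1))) := by
        have k1 := mul_le_mul_of_nonneg_left hE₁ ha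
        have k2 := mul_le_mul_of_nonneg_left hE₂ hb
        have h3 : a * ε + b * ε = ε := by rw [← add_mul, hab, one_mul]
        nlinarith [k1, k2, h3]
      linarith [step, hE]
  -- convexity inequality for G at convex combinations
  have hGconv : ∀ (a b : ℝ) (p₁ p₂ : ℝ × EuclideanSpace ℝ (Fin n) × ℝ),
      0 ≤ a → 0 ≤ b → a + b = 1 →
      G (a * p₁.1 + b * p₂.1, a • p₁.2.1 + b • p₂.2.1, a * p₁.2.2 + b * p₂.2.2)
        ≤ a * G p₁ + b * G p₂ := by
    intro a b p₁ p₂ ha hb hab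
    simp only [hG]
    have hm : ‖a • p₁.2.1 + b • p₂.2.1 - v‖ ≤ a * ‖p₁.2.1 - v‖ + b * ‖p₂.2.1 - v‖ := by
      have hv : a • p₁.2.1 + b • p₂.2.1 - v = a • (p₁.2.1 - v) + b • (p₂.2.1 - v) := by
        have hvv : a • v + b • v = v := by rw [← add_smul, hab, one_smul]
        have h₀ : a • (p₁.2.1 - v) + b • (p₂.2.1 - v)
            = a • p₁.2.1 + b • p₂.2.1 - (a • v + b • v) := by
          rw [smul_sub, smul_sub]; abel
        rw [h₀, hvv]
      rw [hv]
      calc ‖a • (p₁.2.1 - v) + b • (p₂.2.1 - v)‖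
          ≤ ‖a • (p₁.2.1 - v)‖ + ‖b • (p₂.2.1 - v)‖ := norm_add_le _ _
        _ = a * ‖p₁.2.1 - v‖ + b * ‖p₂.2.1 - v‖ := by
            rw [norm_smul, norm_smul, Real.norm_eq_abs, Real.norm_eq_abs,
              abs_of_nonneg ha, abs_of_nonneg hb]
    have huu : a * u + b * u = u := by rw [← add_mul, hab, one_mul]
    have hww : a * w + b * w = w := by rw [← add_mul, hab, one_mul]
    have hru : a * p₁.1 + b * p₂.1 - u = a * (p₁.1 - u) + b * (p₂.1 - u) := by
      have : a * (p₁.1 - u) + b * (p₂.1 - u)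
          = a * p₁.1 + b * p₂.1 - (a * u + b * u) := by ring
      rw [this, huu]
    have hrw : a * p₁.2.2 + b * p₂.2.2 - w = a * (p₁.2.2 - w) + b * (p₂.2.2 - w) := by
      have : a * (p₁.2.2 - w) + b * (p₂.2.2 - w)
          = a * p₁.2.2 + b * p₂.2.2 - (a * w + b * w) := by ring
      rw [this, hww]
    have step1 : Real.sqrt ((a * p₁.1 + b * p₂.1 - u) ^ 2
          + ‖a • p₁.2.1 + b • p₂.2.1 - v‖ ^ 2 + (a * p₁.2.2 + b * p₂.2.2 - w) ^ 2)
        ≤ Real.sqrt ((a * (p₁.1 - u) + b * (p₂.1 - u)) ^ 2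
          + (a * ‖p₁.2.1 - v‖ + b * ‖p₂.2.1 - v‖) ^ 2
          + (a * (p₁.2.2 - w) + b * (p₂.2.2 - w)) ^ 2) := by
      apply Real.sqrt_le_sqrt
      rw [hru, hrw]
      have h2 : ‖a • p₁.2.1 + b • p₂.2.1 - v‖ ^ 2
          ≤ (a * ‖p₁.2.1 - v‖ + b * ‖p₂.2.1 - v‖) ^ 2 := by
        have := norm_nonneg (a • p₁.2.1 + b • p₂.2.1 - v)
        nlinarith
      linarith
    have step2 : Real.sqrt ((a * (p₁.1 - u) + b * (p₂.1 - u)) ^ 2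
          + (a * ‖p₁.2.1 - v‖ + b * ‖p₂.2.1 - v‖) ^ 2
          + (a * (p₁.2.2 - w) + b * (p₂.2.2 - w)) ^ 2)
        ≤ Real.sqrt ((a * (p₁.1 - u)) ^ 2 + (a * ‖p₁.2.1 - v‖) ^ 2 + (a * (p₁.2.2 - w)) ^ 2)
          + Real.sqrt ((b * (p₂.1 - u)) ^ 2 + (b * ‖p₂.2.1 - v‖) ^ 2
            + (b * (p₂.2.2 - w)) ^ 2) := by
      have := sqrt_tri (a * (p₁.1 - u)) (a * ‖p₁.2.1 - v‖) (a * (p₁.2.2 - w))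
        (b * (p₂.1 - u)) (b * ‖p₂.2.1 - v‖) (b * (p₂.2.2 - w))
      convert this using 3 <;> ring
    have factA : Real.sqrt ((a * (p₁.1 - u)) ^ 2 + (a * ‖p₁.2.1 - v‖) ^ 2
          + (a * (p₁.2.2 - w)) ^ 2)
        = a * Real.sqrt ((p₁.1 - u) ^ 2 + ‖p₁.2.1 - v‖ ^ 2 + (p₁.2.2 - w) ^ 2) := by
      rw [show (a * (p₁.1 - u)) ^ 2 + (a * ‖p₁.2.1 - v‖) ^ 2 + (a * (p₁.2.2 - w)) ^ 2
          = a ^ 2 * ((p₁.1 - u) ^ 2 + ‖p₁.2.1 - v‖ ^ 2 + (p₁.2.2 - w) ^ 2) by ring]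
      rw [Real.sqrt_mul (sq_nonneg a), Real.sqrt_sq ha]
    have factB : Real.sqrt ((b * (p₂.1 - u)) ^ 2 + (b * ‖p₂.2.1 - v‖) ^ 2
          + (b * (p₂.2.2 - w)) ^ 2)
        = b * Real.sqrt ((p₂.1 - u) ^ 2 + ‖p₂.2.1 - v‖ ^ 2 + (p₂.2.2 - w) ^ 2) := by
      rw [show (b * (p₂.1 - u)) ^ 2 + (b * ‖p₂.2.1 - v‖) ^ 2 + (b * (p₂.2.2 - w)) ^ 2
          = b ^ 2 * ((p₂.1 - u) ^ 2 + ‖p₂.2.1 - v‖ ^ 2 + (p₂.2.2 - w) ^ 2) by ring]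
      rw [Real.sqrt_mul (sq_nonneg b), Real.sqrt_sq hb]
    calc _ ≤ _ := step1
      _ ≤ _ := step2
      _ = _ := by rw [factA, factB]
  -- convexity of dfun
  have hd_conv : ∀ (a b β₁ β₂ : ℝ), 0 ≤ a → 0 ≤ b → a + b = 1 →
      dfun (a * β₁ + b * β₂) ≤ a * dfun β₁ + b * dfun β₂ := by
    intro a b β₁ β₂ ha hb hab
    refine le_of_forall_pos_le_add ?_
    intro δ hδ
    have h₁ : ∃ p₁ ∈ Feps n ε β₁, G p₁ < dfun β₁ + δ / 2 := by
      have : sInf (G '' Feps n ε β₁) < dfun β₁ + δ / 2 := by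
        have : dfun β₁ = sInf (G '' Feps n ε β₁) := rfl
        rw [← this]; linarith
      obtain ⟨x, ⟨p, hp, rfl⟩, hx⟩ := (csInf_lt_iff (hbdd β₁) (himne β₁)).1 this
      exact ⟨p, hp, hx⟩
    have h₂ : ∃ p₂ ∈ Feps n ε β₂, G p₂ < dfun β₂ + δ / 2 := by
      have : sInf (G '' Feps n ε β₂) < dfun β₂ + δ / 2 := by
        have : dfun β₂ = sInf (G '' Feps n ε β₂) := rfl
        rw [← this]; linarith
      obtain ⟨x, ⟨p, hp, rfl⟩, hx⟩ := (csInf_lt_iff (hbdd β₂) (himne β₂)).1 this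
      exact ⟨p, hp, hx⟩
    obtain ⟨p₁, hp₁, hG₁⟩ := h₁
    obtain ⟨p₂, hp₂, hG₂⟩ := h₂
    have hmem' := hmem a b β₁ β₂ p₁ p₂ ha hb hab hp₁ hp₂
    have hle := hd_le (a * β₁ + b * β₂) _ hmem'
    have hGc := hGconv a b p₁ p₂ ha hb hab
    have : a * G p₁ + b * G p₂ ≤ a * (dfun β₁ + δ / 2) + b * (dfun β₂ + δ / 2) := by
      have t1 := mul_le_mul_of_nonneg_left hG₁.le ha
      have t2 := mul_le_mul_of_nonneg_left hG₂.le hb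
      linarith
    calc dfun (a * β₁ + b * β₂) ≤ _ := hle
      _ ≤ a * G p₁ + b * G p₂ := hGc
      _ ≤ a * (dfun β₁ + δ / 2) + b * (dfun β₂ + δ / 2) := this
      _ ≤ a * dfun β₁ + b * dfun β₂ + δ := by
          have hδδ : a * (δ / 2) + b * (δ / 2) = δ / 2 := by rw [← add_mul, hab, one_mul]
          linarith [hδδ, hδ.le]
  -- main proof
  constructor
  · exact convex_Ici 0
  · intro x hx y hy hxy a b ha hb hab
    simp only [Set.mem_Ici] at hx hy
    simp only [smul_eq_mul]
    have hzn : 0 < ‖z‖ := norm_pos_iff.2 hz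
    -- the dist² part: convexity
    have hdc : dfun (a * x + b * y) ≤ a * dfun x + b * dfun y :=
      hd_conv a b x y ha.le hb.le hab
    have hsq : dfun (a * x + b * y) ^ 2 ≤ a * dfun x ^ 2 + b * dfun y ^ 2 := by
      have h1 : dfun (a * x + b * y) ^ 2 ≤ (a * dfun x + b * dfun y) ^ 2 := by
        have h0 := hd_nonneg (a * x + b * y)
        nlinarith [hd_nonneg x, hd_nonneg y]
      have h2 : (a * dfun x + b * dfun y) ^ 2 ≤ a * dfun x ^ 2 + b * dfun y ^ 2 := by
        nlinarith [sq_nonneg (dfun x - dfun y), mul_nonneg ha.le hb.le]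
      linarith
    -- the sqrt part: strict convexity
    have hsqrt : a * Real.sqrt x + b * Real.sqrt y < Real.sqrt (a * x + b * y) := by
      have := Real.strictConcaveOn_sqrt.2 hx hy hxy ha hb hab
      simpa [smul_eq_mul] using this
    have hmix : 0 ≤ a * x + b * y := by nlinarith
    have hxs := Real.sq_sqrt hx
    have hys := Real.sq_sqrt hy
    have hms := Real.sq_sqrt hmix
    have hstrict : (Real.sqrt (a * x + b * y) - ‖z‖) ^ 2
        < a * (Real.sqrt x - ‖z‖) ^ 2 + b * (Real.sqrt y - ‖z‖) ^ 2 := by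
      have key := mul_lt_mul_of_pos_left hsqrt hzn
      have h1 : a * Real.sqrt x ^ 2 = a * x := by rw [hxs]
      have h2 : b * Real.sqrt y ^ 2 = b * y := by rw [hys]
      have hc2 : a * ‖z‖ ^ 2 + b * ‖z‖ ^ 2 = ‖z‖ ^ 2 := by rw [← add_mul, hab, one_mul]
      nlinarith [key, h1, h2, hc2, hms]
    linarith
end

section
/- Fix ε > 0, a point (u, v, w) ∈ ℝ × ℝⁿ × ℝ, and a nonzero z ∈ ℝⁿ. Define f(β) = dist((u,v,w), F^ε_β)² and d²(β) = f(β) + (√β − ‖z‖₂)² for β ≥ 0. Then d² is continuous on [0, ∞); in particular, f is continuous at β = 0. -/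
lemma sqrt_shift (a c δ : ℝ) (ha : 0 ≤ a) :
    Real.sqrt (a + (c + δ) ^ 2) ≤ Real.sqrt (a + c ^ 2) + |δ| := by
  have hs : Real.sqrt (a + c ^ 2) ^ 2 = a + c ^ 2 := Real.sq_sqrt (by positivity)
  have hc : |c| ≤ Real.sqrt (a + c ^ 2) := by
    rw [← Real.sqrt_sq_eq_abs]
    exact Real.sqrt_le_sqrt (by linarith)
  have h1 : a + (c + δ) ^ 2 ≤ (Real.sqrt (a + c ^ 2) + |δ|) ^ 2 := by
    have hcd : c * δ ≤ Real.sqrt (a + c ^ 2) * |δ| := by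
      calc c * δ ≤ |c * δ| := le_abs_self _
        _ = |c| * |δ| := abs_mul c δ
        _ ≤ Real.sqrt (a + c ^ 2) * |δ| := mul_le_mul_of_nonneg_right hc (abs_nonneg δ)
    have hδ2 : δ ^ 2 = |δ| ^ 2 := (sq_abs δ).symm
    nlinarith [hcd, hs, hδ2]
  calc Real.sqrt (a + (c + δ) ^ 2) ≤ Real.sqrt ((Real.sqrt (a + c ^ 2) + |δ|) ^ 2) :=
        Real.sqrt_le_sqrt h1
    _ = Real.sqrt (a + c ^ 2) + |δ| := Real.sqrt_sq (by positivity)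

lemma Feps_nonempty (n : ℕ) (ε β : ℝ) (hε : 0 < ε) : (Feps n ε β).Nonempty := by
  refine ⟨(ε, 0, ε + β / 2), le_refl _, ?_⟩
  simp [norm_zero]

lemma distTo_lip (n : ℕ) (ε : ℝ) (hε : 0 < ε) (u : ℝ) (v : EuclideanSpace ℝ (Fin n)) (w : ℝ)
    (β β' : ℝ) :
    distTo n u v w (Feps n ε β') ≤ distTo n u v w (Feps n ε β) + |β' - β| / 2 := by
  set g : ℝ × EuclideanSpace ℝ (Fin n) × ℝ → ℝ :=
    fun p => Real.sqrt ((p.1 - u) ^ 2 + ‖p.2.1 - v‖ ^ 2 + (p.2.2 - w) ^ 2) with hg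
  have hbdd : ∀ γ : ℝ, BddBelow (g '' Feps n ε γ) := by
    intro γ
    refine ⟨0, ?_⟩
    rintro x ⟨p, _, rfl⟩
    exact Real.sqrt_nonneg _
  have hne : ∀ γ : ℝ, (g '' Feps n ε γ).Nonempty :=
    fun γ => (Feps_nonempty n ε γ hε).image g
  rw [distTo, distTo, ← sub_le_iff_le_add]
  apply le_csInf (hne β)
  rintro b ⟨p, hp, rfl⟩
  rw [sub_le_iff_le_add]
  set δ : ℝ := (β' - β) / 2 with hδ
  have hq : (p.1, p.2.1, p.2.2 + δ) ∈ Feps n ε β' := by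
    obtain ⟨h₁, h₂⟩ := hp
    refine ⟨h₁, ?_⟩
    show ε + β' / 2 ≤ p.2.2 + δ - ‖p.2.1‖ ^ 2 / (2 * p.1)
    have h₂' : ε + β / 2 ≤ p.2.2 - ‖p.2.1‖ ^ 2 / (2 * p.1) := h₂
    rw [hδ]
    linarith
  have h1 : sInf (g '' Feps n ε β') ≤ g (p.1, p.2.1, p.2.2 + δ) :=
    csInf_le (hbdd β') ⟨_, hq, rfl⟩
  have h2 : g (p.1, p.2.1, p.2.2 + δ) ≤ g p + |δ| := by
    simp only [hg]
    have : p.2.2 + δ - w = (p.2.2 - w) + δ := by ring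
    rw [this]
    have := sqrt_shift ((p.1 - u) ^ 2 + ‖p.2.1 - v‖ ^ 2) (p.2.2 - w) δ (by positivity)
    calc Real.sqrt ((p.1 - u) ^ 2 + ‖p.2.1 - v‖ ^ 2 + (p.2.2 - w + δ) ^ 2)
        ≤ Real.sqrt ((p.1 - u) ^ 2 + ‖p.2.1 - v‖ ^ 2 + (p.2.2 - w) ^ 2) + |δ| := by
          convert this using 3 <;> ring
      _ = _ := rfl
  have hδabs : |δ| = |β' - β| / 2 := by
    rw [hδ, abs_div]
    norm_num
  linarith [hδabs ▸ h2, h1]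

/-- `d²(β) = dist((u,v,w), F^ε_β)² + (√β − ‖z‖₂)²` is continuous on
`[0, ∞)`; in particular, `f(β) = dist((u,v,w), F^ε_β)²` is continuous at `β = 0`
(within `[0, ∞)`). -/
theorem d2_continuous (n : ℕ) (hn : 0 < n) (ε : ℝ) (hε : 0 < ε)
    (u : ℝ) (v : EuclideanSpace ℝ (Fin n)) (w : ℝ)
    (z : EuclideanSpace ℝ (Fin n)) (hz : z ≠ 0) :
    ContinuousOn
      (fun β : ℝ => distTo n u v w (Feps n ε β) ^ 2 + (Real.sqrt β - ‖z‖) ^ 2)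
      (Set.Ici (0 : ℝ)) ∧
    ContinuousWithinAt (fun β : ℝ => distTo n u v w (Feps n ε β) ^ 2)
      (Set.Ici (0 : ℝ)) 0 := by
  have hc : Continuous (fun β : ℝ => distTo n u v w (Feps n ε β)) := by
    apply LipschitzWith.continuous (K := 1/2)
    apply LipschitzWith.of_dist_le_mul
    intro β' β
    rw [Real.dist_eq, Real.dist_eq]
    have h1 := distTo_lip n ε hε u v w β β'
    have h2 := distTo_lip n ε hε u v w β' β
    have hK : ((1/2 : NNReal) : ℝ) = 1/2 := by norm_num
    rw [hK, abs_le, abs_sub_comm β β'] at *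
    constructor <;> linarith
  have hsq : Continuous (fun β : ℝ => distTo n u v w (Feps n ε β) ^ 2) := hc.pow 2
  refine ⟨?_, hsq.continuousWithinAt⟩
  exact (hsq.add (((Real.continuous_sqrt.sub continuous_const).pow 2))).continuousOn
end

section
/- Fix ε > 0 and a point (u, v, w) ∈ ℝ × ℝⁿ × ℝ. Then the map β ↦ dist((u,v,w), F^ε_β) is (1/2)-Lipschitz on [0, ∞): for all β₁, β₂ ≥ 0, |dist((u,v,w), F^ε_{β₁}) − dist((u,v,w), F^ε_{β₂})| ≤ (1/2)|β₁ − β₂|. -/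
lemma sqrt_shift_s15 (A x t : ℝ) (hA : 0 ≤ A) :
    Real.sqrt (A + (x + t) ^ 2) ≤ Real.sqrt (A + x ^ 2) + |t| := by
  have h1 : Real.sqrt (x ^ 2) ≤ Real.sqrt (A + x ^ 2) := Real.sqrt_le_sqrt (by linarith)
  rw [Real.sqrt_sq_eq_abs] at h1
  have h3 : Real.sqrt (A + x ^ 2) ^ 2 = A + x ^ 2 := Real.sq_sqrt (by positivity)
  have key : A + (x + t) ^ 2 ≤ (Real.sqrt (A + x ^ 2) + |t|) ^ 2 := by
    nlinarith [abs_nonneg t, sq_abs t, le_abs_self (x * t), abs_mul x t,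
      mul_le_mul_of_nonneg_right h1 (abs_nonneg t)]
  calc Real.sqrt (A + (x + t) ^ 2) ≤ Real.sqrt ((Real.sqrt (A + x ^ 2) + |t|) ^ 2) :=
        Real.sqrt_le_sqrt key
    _ = _ := Real.sqrt_sq (by positivity)

lemma distTo_shift (n : ℕ) (ε : ℝ) (hε : 0 < ε) (u : ℝ) (v : EuclideanSpace ℝ (Fin n)) (w : ℝ)
    (a b : ℝ) :
    distTo n u v w (Feps n ε b) ≤ distTo n u v w (Feps n ε a) + |b - a| / 2 := by
  unfold distTo
  set f : ℝ × EuclideanSpace ℝ (Fin n) × ℝ → ℝ :=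
    fun p => Real.sqrt ((p.1 - u) ^ 2 + ‖p.2.1 - v‖ ^ 2 + (p.2.2 - w) ^ 2) with hf
  have hne : (Feps n ε a).Nonempty := ⟨(ε, 0, ε + a / 2), le_refl ε, by
    simp [norm_zero]⟩
  have himg : (f '' Feps n ε a).Nonempty := hne.image f
  have hbdd : BddBelow (f '' Feps n ε b) := by
    refine ⟨0, ?_⟩
    rintro x ⟨p, -, rfl⟩
    exact Real.sqrt_nonneg _
  have hmain : sInf (f '' Feps n ε b) - |b - a| / 2 ≤ sInf (f '' Feps n ε a) := by
    apply le_csInf himg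
    rintro x ⟨p, ⟨h1, h2⟩, rfl⟩
    have hp' : (p.1, p.2.1, p.2.2 + (b - a) / 2) ∈ Feps n ε b := by
      refine ⟨h1, ?_⟩
      simp only
      linarith
    have hle : sInf (f '' Feps n ε b) ≤ f (p.1, p.2.1, p.2.2 + (b - a) / 2) :=
      csInf_le hbdd ⟨_, hp', rfl⟩
    have hfs : f (p.1, p.2.1, p.2.2 + (b - a) / 2) ≤ f p + |b - a| / 2 := by
      have h := sqrt_shift_s15 ((p.1 - u) ^ 2 + ‖p.2.1 - v‖ ^ 2) (p.2.2 - w) ((b - a) / 2)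
        (by positivity)
      have habs : |(b - a) / 2| = |b - a| / 2 := by
        rw [abs_div]; norm_num
      have heq : p.2.2 + (b - a) / 2 - w = (p.2.2 - w) + (b - a) / 2 := by ring
      simp only [hf, heq]
      rw [← habs]
      exact h
    linarith
  linarith

/-- The map `β ↦ dist((u,v,w), F^ε_β)` is `(1/2)`-Lipschitz on
`[0, ∞)`. -/
theorem dist_lipschitz (n : ℕ) (hn : 0 < n) (ε : ℝ) (hε : 0 < ε)
    (u : ℝ) (v : EuclideanSpace ℝ (Fin n)) (w : ℝ) :
    ∀ β₁ β₂ : ℝ, 0 ≤ β₁ → 0 ≤ β₂ →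
      |distTo n u v w (Feps n ε β₁) - distTo n u v w (Feps n ε β₂)| ≤
        (1 / 2) * |β₁ - β₂| := by
  intro β₁ β₂ _ _
  have h1 := distTo_shift n ε hε u v w β₂ β₁
  have h2 := distTo_shift n ε hε u v w β₁ β₂
  have hc : |β₂ - β₁| = |β₁ - β₂| := abs_sub_comm _ _
  rw [abs_sub_le_iff]
  constructor <;> [skip; rw [← hc] at *] <;> linarith [hc]
end
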